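/- Fix q > 0, an integer n ≥ 1, 0 < λ < n, and integers m, r with 1 ≤ r < m < n. Then Z_{n,λ,q}[ {|V_r| = m and N_r = 1} ] = C(n,m) (1 − λ/n)^{m(n−m)} · Z^{(m)}[K^{(m)}] · Z^{(n−m)}[B_r^{(n−m)}], where C(n,m) is the binomial coefficient, Z^{(m)}[K^{(m)}] is the total random cluster weight (with edge weight p = λ/n and cluster weight q) of configurations on the complete graph K_m that are connected, and Z^{(n−m)}[B_r^{(n−m)}] is the total random cluster weight (with edge weight p = λ/n and cluster weight q) of configurations on the complete graph K_{n−m} with no connected component of size larger than r. -/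

import Mathlib

open Filter Topology Set

noncomputable section

/-- Size of the connected component of `K_n(ω)` containing the vertex `v`. -/
def compSize {n : ℕ} (G : SimpleGraph (Fin n)) (v : Fin n) : ℕ :=
  (G.connectedComponentMk v).supp.ncard

/-- Random cluster weight of a configuration `G` on the complete graph `K_m`,
with edge weight `p` and cluster weight `q`. -/
def rcW (m : ℕ) (p q : ℝ) (G : SimpleGraph (Fin m)) : ℝ :=
  p ^ G.edgeSet.ncard * (1 - p) ^ (m * (m - 1) / 2 - G.edgeSet.ncard) *
    q ^ Nat.card G.ConnectedComponent

/-- Total random-cluster weight of an event, with explicit edge weight `p`. -/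
def ZP (m : ℕ) (p q : ℝ) (A : Set (SimpleGraph (Fin m))) : ℝ :=
  ∑ᶠ G ∈ A, rcW m p q G

/-- `Z_{n,λ,q}[A]`, i.e. the total weight of the event `A` with `p = λ/n`. -/
def Zrc (n : ℕ) (lam q : ℝ) (A : Set (SimpleGraph (Fin n))) : ℝ :=
  ZP n (lam / n) q A

/-- The partition function `Z_{n,λ,q}`. -/
def Ztot (n : ℕ) (lam q : ℝ) : ℝ := Zrc n lam q Set.univ

/-- The random cluster probability `φ_{n,λ,q}[A]`. -/
def phiRC (n : ℕ) (lam q : ℝ) (A : Set (SimpleGraph (Fin n))) : ℝ :=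
  Zrc n lam q A / Ztot n lam q

/-- The event `K` that the configuration is connected. -/
def Kev (n : ℕ) : Set (SimpleGraph (Fin n)) := {G | G.Connected}

/-- The event `B_r` that no connected component has size larger than `r`. -/
def Bev (n : ℕ) (r : ℝ) : Set (SimpleGraph (Fin n)) :=
  {G | ∀ v, (compSize G v : ℝ) ≤ r}

/-- The event `L` that the configuration is acyclic. -/
def Lev (n : ℕ) : Set (SimpleGraph (Fin n)) := {G | G.IsAcyclic}

/-- The set `V_r` of vertices lying in components of size larger than `r`. -/
def Vbig {n : ℕ} (G : SimpleGraph (Fin n)) (r : ℝ) : Set (Fin n) :=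
  {v | r < (compSize G v : ℝ)}

/-- The number `N_r` of connected components of size larger than `r`. -/
def Nbig {n : ℕ} (G : SimpleGraph (Fin n)) (r : ℝ) : ℕ :=
  {C : G.ConnectedComponent | r < (C.supp.ncard : ℝ)}.ncard

def pi1 (x : ℝ) : ℝ := 1 - Real.exp (-x)

def Psi (x : ℝ) : ℝ := min (Real.log x - (x - 1/x) / 2) 0

def Sent (θ : ℝ) : ℝ := θ * Real.log θ + (1 - θ) * Real.log (1 - θ)

def Phi (θ lam q : ℝ) : ℝ :=
  -Sent θ + (1 - θ) * Real.log (1 - pi1 (lam * θ)) + θ * Real.log (pi1 (lam * θ)) +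
    (1 - θ) * (Psi (lam * (1 - θ) / q) - ((q - 1) / (2 * q)) * (lam * (1 - θ)) + Real.log q)

/-! Split the event according to the vertex set `S = V_r`, a set of size `m`. Adjacent vertices
lie in the same component, so a configuration with `V_r = S` has no edge between `S` and its
complement: it is the disjoint union of a configuration on `S` whose components are all larger
than `r` and one on the complement whose components all have size at most `r`. Then `N_r = 1`
says exactly that the part on `S` is connected (which makes it large, as `m > r`). The
random-cluster weight factors over the disjoint union, the `m (n - m)` absent crossing edges
contributing `(1 - λ/n) ^ (m (n - m))`, and the `C(n, m)` choices of `S` all give the same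
contribution. -/

theorem Nat.add_choose_two (a b : ℕ) : (a + b).choose 2 = a.choose 2 + b.choose 2 + a * b := by
  rw [Nat.add_choose_eq, Finset.Nat.sum_antidiagonal_succ, Finset.Nat.sum_antidiagonal_succ,
    Finset.Nat.antidiagonal_zero, Finset.sum_singleton]
  simp only [zero_add, choose_zero_right, choose_one_right]
  ring

namespace SimpleGraph

variable {V W V' : Type*} {G : SimpleGraph V} {H : SimpleGraph W} {G' : SimpleGraph V'}

theorem reachable_sum_inl_inl {u v : V} :
    (G ⊕g H).Reachable (.inl u) (.inl v) ↔ G.Reachable u v := by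
  refine ⟨fun h => ?_, fun h => h.map Embedding.sumInl.toHom⟩
  rw [reachable_iff_reflTransGen] at h ⊢
  refine h.lift' (Sum.elim id fun _ => u) ?_
  rintro (a | a) (b | b) hab
  · exact .single hab
  · exact absurd hab (not_adj_sum_inl_inr a b)
  · exact absurd hab.symm (not_adj_sum_inl_inr b a)
  · exact .refl

theorem reachable_sum_inr_inr {u v : W} :
    (G ⊕g H).Reachable (.inr u) (.inr v) ↔ H.Reachable u v := by
  rw [← (Iso.sumComm (G := G) (H := H)).reachable_iff]
  exact reachable_sum_inl_inl

theorem not_reachable_sum_inr_inl (v : W) (w : V) : ¬(G ⊕g H).Reachable (.inr v) (.inl w) :=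
  fun h => not_reachable_sum_inl_inr w v h.symm

def connectedComponentSumEquiv :
    (G ⊕g H).ConnectedComponent ≃ G.ConnectedComponent ⊕ H.ConnectedComponent where
  toFun := ConnectedComponent.lift
    (Sum.elim (fun u => .inl (G.connectedComponentMk u)) fun u => .inr (H.connectedComponentMk u))
    (by
      rintro (u | u) (v | v) p -
      · exact congrArg Sum.inl (ConnectedComponent.sound (reachable_sum_inl_inl.mp p.reachable))
      · exact absurd p.reachable (not_reachable_sum_inl_inr u v)
      · exact absurd p.reachable (not_reachable_sum_inr_inl u v)
      · exact congrArg Sum.inr (ConnectedComponent.sound (reachable_sum_inr_inr.mp p.reachable)))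
  invFun := Sum.elim (ConnectedComponent.map Embedding.sumInl.toHom)
    (ConnectedComponent.map Embedding.sumInr.toHom)
  left_inv := by
    refine ConnectedComponent.ind ?_
    rintro (u | u) <;> rfl
  right_inv := by
    rintro (C | C) <;> induction C using ConnectedComponent.ind <;> rfl

theorem supp_connectedComponentMk_sum_inl (u : V) :
    ((G ⊕g H).connectedComponentMk (.inl u)).supp = Sum.inl '' (G.connectedComponentMk u).supp := by
  ext (v | v)
  · simp [reachable_sum_inl_inl]
  · simpa using not_reachable_sum_inr_inl v u

theorem supp_connectedComponentMk_sum_inr (u : W) :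
    ((G ⊕g H).connectedComponentMk (.inr u)).supp = Sum.inr '' (H.connectedComponentMk u).supp := by
  ext (v | v)
  · simpa using not_reachable_sum_inl_inr v u
  · simp [reachable_sum_inr_inr]

theorem ncard_supp_connectedComponentSumEquiv (C : (G ⊕g H).ConnectedComponent) :
    C.supp.ncard = Sum.elim (fun D => D.supp.ncard) (fun D => D.supp.ncard)
      (connectedComponentSumEquiv C) := by
  induction C using ConnectedComponent.ind with
  | h x =>
    rcases x with u | u
    · rw [supp_connectedComponentMk_sum_inl, Set.ncard_image_of_injective _ Sum.inl_injective]
      rfl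
    · rw [supp_connectedComponentMk_sum_inr, Set.ncard_image_of_injective _ Sum.inr_injective]
      rfl

theorem ncard_setOf_connectedComponent_sum [Finite V] [Finite W] (P : ℕ → Prop) :
    {C : (G ⊕g H).ConnectedComponent | P C.supp.ncard}.ncard =
      {C : G.ConnectedComponent | P C.supp.ncard}.ncard +
        {C : H.ConnectedComponent | P C.supp.ncard}.ncard := by
  have hset : {C : (G ⊕g H).ConnectedComponent | P C.supp.ncard} = connectedComponentSumEquiv ⁻¹'
      (Sum.inl '' {C | P C.supp.ncard} ∪ Sum.inr '' {C | P C.supp.ncard}) := by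
    ext C
    rw [Set.mem_preimage, Set.mem_ofPred_eq, ncard_supp_connectedComponentSumEquiv C]
    rcases connectedComponentSumEquiv C with D | D <;> simp
  rw [hset, Set.ncard_preimage_of_injective_subset_range (Equiv.injective _) (by simp),
    Set.ncard_union_eq Set.disjoint_image_inl_image_inr,
    Set.ncard_image_of_injective _ Sum.inl_injective,
    Set.ncard_image_of_injective _ Sum.inr_injective]

theorem card_connectedComponent_sum [Finite V] [Finite W] :
    Nat.card (G ⊕g H).ConnectedComponent =
      Nat.card G.ConnectedComponent + Nat.card H.ConnectedComponent := by
  rw [Nat.card_congr connectedComponentSumEquiv, Nat.card_sum]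

theorem ncard_edgeSet_sum [Finite V] [Finite W] :
    (G ⊕g H).edgeSet.ncard = G.edgeSet.ncard + H.edgeSet.ncard := by
  simp only [← Nat.card_coe_set_eq, Nat.card_congr edgeSetSumEquiv, Nat.card_sum]

theorem comap_inl_sum : (G ⊕g H).comap Sum.inl = G := by
  ext; simp

theorem comap_inr_sum : (G ⊕g H).comap Sum.inr = H := by
  ext; simp

theorem comap_inl_sum_comap_inr {K : SimpleGraph (V ⊕ W)}
    (h : ∀ a b, ¬K.Adj (.inl a) (.inr b)) : K.comap Sum.inl ⊕g K.comap Sum.inr = K := by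
  ext (a | a) (b | b)
  · simp
  · simpa using h a b
  · simpa [K.adj_comm] using h b a
  · simp

theorem Iso.ncard_supp_connectedComponentEquiv (φ : G ≃g G') (C : G.ConnectedComponent) :
    (φ.connectedComponentEquiv C).supp.ncard = C.supp.ncard := by
  simp only [← Nat.card_coe_set_eq, Nat.card_congr (ConnectedComponent.isoEquivSupp φ C)]

theorem Iso.ncard_setOf_connectedComponent (φ : G ≃g G') (P : ℕ → Prop) :
    {C : G.ConnectedComponent | P C.supp.ncard}.ncard =
      {C : G'.ConnectedComponent | P C.supp.ncard}.ncard := by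
  have hset : {C : G.ConnectedComponent | P C.supp.ncard} =
      φ.connectedComponentEquiv ⁻¹' {C | P C.supp.ncard} := by
    ext C
    rw [Set.mem_preimage, Set.mem_ofPred_eq, Set.mem_ofPred_eq,
      φ.ncard_supp_connectedComponentEquiv]
  rw [hset, Set.ncard_preimage_of_injective_subset_range (Equiv.injective _) (by simp)]

theorem Iso.ncard_edgeSet_eq (φ : G ≃g G') : G.edgeSet.ncard = G'.edgeSet.ncard := by
  simp only [← Nat.card_coe_set_eq, Nat.card_congr φ.mapEdgeSet]

theorem Iso.card_connectedComponent_eq (φ : G ≃g G') :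
    Nat.card G.ConnectedComponent = Nat.card G'.ConnectedComponent :=
  Nat.card_congr φ.connectedComponentEquiv

theorem card_connectedComponent_eq_one_iff :
    Nat.card G.ConnectedComponent = 1 ↔ G.Connected := by
  rw [Nat.card_eq_one_iff_unique, connected_iff]
  refine ⟨fun ⟨hs, ⟨C⟩⟩ => ⟨fun u v => ConnectedComponent.exact (hs.elim _ _), ⟨Quot.out C⟩⟩,
    fun ⟨hp, ⟨v⟩⟩ => ⟨hp.subsingleton_connectedComponent, ⟨G.connectedComponentMk v⟩⟩⟩

theorem ncard_edgeSet_le_choose_two [Fintype V] : G.edgeSet.ncard ≤ (Fintype.card V).choose 2 := by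
  classical
  rw [← coe_edgeFinset, Set.ncard_coe_finset]
  exact card_edgeFinset_le_card_choose_two

end SimpleGraph

open SimpleGraph

theorem compSize_eq_of_adj {n : ℕ} {G : SimpleGraph (Fin n)} {x y : Fin n} (h : G.Adj x y) :
    compSize G x = compSize G y := by
  rw [compSize, compSize, ConnectedComponent.connectedComponentMk_eq_of_adj h]

theorem compSize_eq_of_connected {m : ℕ} {G : SimpleGraph (Fin m)} (h : G.Connected) (u : Fin m) :
    compSize G u = m := by
  rw [compSize, show (G.connectedComponentMk u).supp = Set.univ from
    Set.eq_univ_of_forall fun v => ConnectedComponent.sound (h.preconnected v u),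
    Set.ncard_univ, Nat.card_fin]

theorem Nbig_eq_card_of_forall_lt {m : ℕ} {G : SimpleGraph (Fin m)} {r : ℝ}
    (h : ∀ u, r < compSize G u) : Nbig G r = Nat.card G.ConnectedComponent := by
  rw [Nbig, Set.eq_univ_of_forall (s := {C : G.ConnectedComponent | r < C.supp.ncard})
    (ConnectedComponent.ind h), Set.ncard_univ]

theorem Nbig_eq_zero_of_mem_Bev {k : ℕ} {G : SimpleGraph (Fin k)} {r : ℝ} (h : G ∈ Bev k r) :
    Nbig G r = 0 := by
  rw [Nbig, Set.eq_empty_of_forall_notMem (s := {C : G.ConnectedComponent | r < C.supp.ncard})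
    (ConnectedComponent.ind fun u => (h u).not_gt), Set.ncard_empty]

section Gluing

variable {n m k : ℕ} (e : Fin m ⊕ Fin k ≃ Fin n) (G₁ : SimpleGraph (Fin m))
  (G₂ : SimpleGraph (Fin k))

theorem compSize_simpleGraph_sum (x : Fin m ⊕ Fin k) :
    compSize (e.simpleGraph (G₁ ⊕g G₂)) (e x) = Sum.elim (compSize G₁) (compSize G₂) x := by
  let φ : e.simpleGraph (G₁ ⊕g G₂) ≃g G₁ ⊕g G₂ := Iso.comap e.symm _
  have hx :
      φ.connectedComponentEquiv (connectedComponentMk _ (e x)) = connectedComponentMk _ x := by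
    show connectedComponentMk _ (e.symm (e x)) = _
    rw [Equiv.symm_apply_apply]
  rw [compSize, ← φ.ncard_supp_connectedComponentEquiv, hx, ncard_supp_connectedComponentSumEquiv]
  rcases x with u | u <;> rfl

theorem Nbig_simpleGraph_sum (r : ℝ) :
    Nbig (e.simpleGraph (G₁ ⊕g G₂)) r = Nbig G₁ r + Nbig G₂ r :=
  ((Iso.comap e.symm _).ncard_setOf_connectedComponent fun s : ℕ => r < s).trans
    (ncard_setOf_connectedComponent_sum fun s : ℕ => r < s)

theorem rcW_simpleGraph_sum (p q : ℝ) :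
    rcW n p q (e.simpleGraph (G₁ ⊕g G₂)) = (1 - p) ^ (m * k) * rcW m p q G₁ * rcW k p q G₂ := by
  let φ : e.simpleGraph (G₁ ⊕g G₂) ≃g G₁ ⊕g G₂ := Iso.comap e.symm _
  obtain rfl : m + k = n := by simpa using Fintype.card_congr e
  have h₁ := ncard_edgeSet_le_choose_two (G := G₁)
  have h₂ := ncard_edgeSet_le_choose_two (G := G₂)
  simp only [Fintype.card_fin] at h₁ h₂
  simp only [rcW, ← Nat.choose_two_right, Nat.add_choose_two, φ.ncard_edgeSet_eq, ncard_edgeSet_sum,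
    φ.card_connectedComponent_eq, card_connectedComponent_sum]
  rw [show m.choose 2 + k.choose 2 + m * k - (G₁.edgeSet.ncard + G₂.edgeSet.ncard) =
    m * k + (m.choose 2 - G₁.edgeSet.ncard) + (k.choose 2 - G₂.edgeSet.ncard) by omega]
  ring

theorem Vbig_simpleGraph_sum_eq_iff {S : Set (Fin n)} (hS : ∀ x, e x ∈ S ↔ x.isLeft) (r : ℝ) :
    Vbig (e.simpleGraph (G₁ ⊕g G₂)) r = S ↔ (∀ u, r < compSize G₁ u) ∧ G₂ ∈ Bev k r := by
  rw [Set.ext_iff, ← e.forall_congr_right]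
  simp only [Vbig, Bev, Set.mem_ofPred_eq, compSize_simpleGraph_sum, hS]
  simp [Sum.forall]

theorem simpleGraph_sum_mem_iff {S : Set (Fin n)} (hS : ∀ x, e x ∈ S ↔ x.isLeft) {r : ℝ}
    (hrm : r < m) :
    e.simpleGraph (G₁ ⊕g G₂) ∈ {G | Vbig G r = S ∧ Nbig G r = 1} ↔
      G₁ ∈ Kev m ∧ G₂ ∈ Bev k r := by
  rw [Set.mem_ofPred_eq, Vbig_simpleGraph_sum_eq_iff e G₁ G₂ hS, Nbig_simpleGraph_sum]
  constructor
  · rintro ⟨⟨h₁, h₂⟩, hN⟩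
    rw [Nbig_eq_zero_of_mem_Bev h₂, Nbig_eq_card_of_forall_lt h₁, add_zero,
      card_connectedComponent_eq_one_iff] at hN
    exact ⟨hN, h₂⟩
  · rintro ⟨h₁, h₂⟩
    have h₁' : ∀ u, r < compSize G₁ u := fun u => by rwa [compSize_eq_of_connected h₁]
    rw [Nbig_eq_zero_of_mem_Bev h₂, Nbig_eq_card_of_forall_lt h₁',
      card_connectedComponent_eq_one_iff.2 h₁]
    exact ⟨⟨h₁', h₂⟩, rfl⟩

end Gluing

theorem simpleGraph_sum_comap_of_Vbig_eq {n m k : ℕ} (e : Fin m ⊕ Fin k ≃ Fin n) {S : Set (Fin n)}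
    (hS : ∀ x, e x ∈ S ↔ x.isLeft) {G : SimpleGraph (Fin n)} {r : ℝ} (hV : Vbig G r = S) :
    e.simpleGraph ((G.comap e).comap Sum.inl ⊕g (G.comap e).comap Sum.inr) = G := by
  rw [comap_inl_sum_comap_inr]
  · exact e.simpleGraph.apply_symm_apply G
  intro a b hab
  have h₁ : e (.inl a) ∈ Vbig G r := hV ▸ (hS _).2 rfl
  have h₂ : e (.inr b) ∉ Vbig G r := hV ▸ fun h => by simpa using (hS _).1 h
  exact h₂ (by simpa [Vbig, compSize_eq_of_adj hab] using h₁)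

theorem finsum_mem_mul_finsum_mem {α β R : Type*} [Finite α] [Finite β]
    [NonUnitalNonAssocSemiring R] (s : Set α) (t : Set β) (f : α → R) (g : β → R) :
    (∑ᶠ a ∈ s, f a) * ∑ᶠ b ∈ t, g b = ∑ᶠ x ∈ s ×ˢ t, f x.1 * g x.2 := by
  classical
  have := Fintype.ofFinite α
  have := Fintype.ofFinite β
  simp only [finsum_mem_eq_toFinset_sum, Set.toFinset_prod, Finset.sum_mul_sum, Finset.sum_product]

theorem finsum_mem_setOf_ncard_eq {α β M : Type*} [Finite α] [Fintype β] [AddCommMonoid M]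
    (V : α → Set β) (P : α → Prop) (f : α → M) (m : ℕ) :
    ∑ᶠ a ∈ {a | (V a).ncard = m ∧ P a}, f a =
      ∑ S ∈ Finset.powersetCard m (Finset.univ : Finset β),
        ∑ᶠ a ∈ {a | V a = (S : Set β) ∧ P a}, f a := by
  classical
  set I : Set (Finset β) := ↑(Finset.powersetCard m (Finset.univ : Finset β))
  have hunion : {a | (V a).ncard = m ∧ P a} = ⋃ S ∈ I, {a | V a = (S : Set β) ∧ P a} := by
    ext a
    simp only [I, Set.mem_ofPred_eq, Set.mem_iUnion, Finset.mem_coe, Finset.mem_powersetCard_univ,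
      exists_prop]
    constructor
    · rintro ⟨hV, hP⟩
      exact ⟨(V a).toFinset, by rw [← hV, Set.ncard_eq_toFinset_card'], by simp, hP⟩
    · rintro ⟨S, hS, hV, hP⟩
      rw [hV, Set.ncard_coe_finset]
      exact ⟨hS, hP⟩
  have hdisj : I.PairwiseDisjoint fun S => {a | V a = (S : Set β) ∧ P a} := fun S _ T _ hST =>
    Set.disjoint_left.2 fun a ha hb => hST (Finset.coe_injective (ha.1.symm.trans hb.1))
  rw [hunion, finsum_mem_biUnion hdisj (Set.toFinite _) fun _ _ => Set.toFinite _,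
    finsum_mem_coe_finset]

theorem ZP_setOf_Vbig_eq_and_Nbig_eq_one {n m k : ℕ} (e : Fin m ⊕ Fin k ≃ Fin n)
    {S : Set (Fin n)} (hS : ∀ x, e x ∈ S ↔ x.isLeft) (p q : ℝ) {r : ℝ} (hrm : r < m) :
    ZP n p q {G | Vbig G r = S ∧ Nbig G r = 1} =
      (1 - p) ^ (m * k) * (ZP m p q (Kev m) * ZP k p q (Bev k r)) := by
  have hres : ∀ G ∈ {G : SimpleGraph (Fin n) | Vbig G r = S ∧ Nbig G r = 1},
      e.simpleGraph ((G.comap e).comap Sum.inl ⊕g (G.comap e).comap Sum.inr) = G :=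
    fun G hG => simpleGraph_sum_comap_of_Vbig_eq e hS hG.1
  have hbij : (Kev m ×ˢ Bev k r).BijOn (fun x => e.simpleGraph (x.1 ⊕g x.2))
      {G | Vbig G r = S ∧ Nbig G r = 1} := by
    refine Set.InvOn.bijOn (f' := fun G => ((G.comap e).comap Sum.inl, (G.comap e).comap Sum.inr))
      ⟨fun x _ => ?_, hres⟩ (fun x hx => (simpleGraph_sum_mem_iff e _ _ hS hrm).2 hx)
      fun G hG => (simpleGraph_sum_mem_iff e _ _ hS hrm).1 ((hres G hG).symm ▸ hG)
    have hx : (e.simpleGraph (x.1 ⊕g x.2)).comap e = x.1 ⊕g x.2 :=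
      e.simpleGraph.symm_apply_apply _
    simp only [hx, comap_inl_sum, comap_inr_sum]
  rw [ZP, ZP, ZP, finsum_mem_mul_finsum_mem, mul_finsum_mem]
  refine (finsum_mem_eq_of_bijOn _ hbij fun x _ => ?_).symm
  rw [rcW_simpleGraph_sum, mul_assoc]

theorem ZP_setOf_Vbig_eq_coe_and_Nbig_eq_one {n m : ℕ} {S : Finset (Fin n)} (hS : S.card = m)
    (p q : ℝ) {r : ℝ} (hrm : r < m) :
    ZP n p q {G | Vbig G r = ↑S ∧ Nbig G r = 1} =
      (1 - p) ^ (m * (n - m)) * (ZP m p q (Kev m) * ZP (n - m) p q (Bev (n - m) r)) := by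
  have hSc : Sᶜ.card = n - m := by rw [Finset.card_compl, Fintype.card_fin, hS]
  refine ZP_setOf_Vbig_eq_and_Nbig_eq_one (finSumEquivOfFinset hS hSc) ?_ p q hrm
  rintro (i | i)
  · simp [Finset.orderEmbOfFin_mem]
  · simp only [finSumEquivOfFinset_inr, Finset.mem_coe, Sum.isLeft_inr, Bool.false_eq_true,
      iff_false]
    exact Finset.mem_compl.1 (Finset.orderEmbOfFin_mem Sᶜ hSc i)

theorem stmt16_general (q lam : ℝ) (n m r : ℕ) (hrm : r < m) :
    Zrc n lam q
        ({G | (Vbig G (r : ℝ)).ncard = m} ∩ {G | Nbig G (r : ℝ) = 1}) =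
      (n.choose m : ℝ) * (1 - lam / n) ^ (m * (n - m)) *
        ZP m (lam / n) q (Kev m) * ZP (n - m) (lam / n) q (Bev (n - m) (r : ℝ)) := by
  rw [Zrc, ZP, ← Set.ofPred_and, finsum_mem_setOf_ncard_eq]
  refine (Finset.sum_congr rfl fun S hS => ZP_setOf_Vbig_eq_coe_and_Nbig_eq_one
    (Finset.mem_powersetCard_univ.1 hS) _ q (by exact_mod_cast hrm)).trans ?_
  rw [Finset.sum_const, Finset.card_powersetCard, Finset.card_univ, Fintype.card_fin, nsmul_eq_mul]
  ring

/-- Fix `q > 0`, an integer `n ≥ 1`, `0 < λ < n`, and integers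
`m, r` with `1 ≤ r < m < n`. Then
`Z_{n,λ,q}[|V_r| = m, N_r = 1] = C(n,m) (1 − λ/n)^{m(n−m)} · Z^{(m)}[K^{(m)}] ·
Z^{(n−m)}[B_r^{(n−m)}]`, where the weights on `K_m` and `K_{n−m}` use the same
edge weight `p = λ/n` and cluster weight `q`. -/
theorem stmt16 (q lam : ℝ) (n m r : ℕ) (hq : 0 < q) (hn : 1 ≤ n)
    (hlam : 0 < lam) (hlamn : lam < n) (hr : 1 ≤ r) (hrm : r < m) (hmn : m < n) :
    Zrc n lam q
        ({G | (Vbig G (r : ℝ)).ncard = m} ∩ {G | Nbig G (r : ℝ) = 1}) =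
      (n.choose m : ℝ) * (1 - lam / n) ^ (m * (n - m)) *
        ZP m (lam / n) q (Kev m) * ZP (n - m) (lam / n) q (Bev (n - m) (r : ℝ)) :=
  stmt16_general q lam n m r hrm
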